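/- Let H = X₁X₂²Y₂⁶ + Y₁X₂⁶Y₂² ∈ V_{1,8} and H' = X₁Y₂⁴ + Y₁X₂⁴ ∈ V_{1,4}. Then T^{(1,2)}(H, H') = 0, and the two linear maps T^{(1,2)}(H, •) : V_{1,4} → V_{0,8} and T^{(1,2)}(•, H') : V_{1,8} → V_{0,8} are both surjective. -/

import Mathlib

set_option synthInstance.maxHeartbeats 1000000
set_option maxHeartbeats 1000000
noncomputable section
open MvPolynomial

/-- The `r`-th transvectant `T^(r) : V_d × V_{d'} → V_{d+d'-2r}` of binary forms (in the
variables `X = X 0`, `Y = X 1`), as a bilinear map: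
`T^(r)(P, P') = ∑_{i=0}^{r} (-1)^i C(r,i) (∂^r P/∂X^(r-i)∂Y^i) (∂^r P'/∂X^i ∂Y^(r-i))`. -/
def transvBil (r : ℕ) :
    MvPolynomial (Fin 2) ℂ →ₗ[ℂ] MvPolynomial (Fin 2) ℂ →ₗ[ℂ] MvPolynomial (Fin 2) ℂ :=
  ∑ i ∈ Finset.range (r + 1),
    ((-1 : ℂ) ^ i * (r.choose i : ℂ)) •
      (LinearMap.mul ℂ (MvPolynomial (Fin 2) ℂ)).compl₁₂
        (((pderiv (0 : Fin 2)).toLinearMap ^ (r - i)) * ((pderiv (1 : Fin 2)).toLinearMap ^ i))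
        (((pderiv (0 : Fin 2)).toLinearMap ^ i) * ((pderiv (1 : Fin 2)).toLinearMap ^ (r - i)))

/-- The `(1,s)`-th transvectant `T^{(1,s)} : V_{1,b} × V_{1,b'} → V_{0,b+b'-2s}` for biforms,
where an element `X₁ ⊗ P + Y₁ ⊗ Q` of `V_{1,b} = V_1 ⊗ V_b` is recorded as the pair
`(P, Q)` of binary forms of degree `b` in `(X₂, Y₂)`:
`T^{(1,s)}((P,Q), (P',Q')) = T^(s)(P, Q') - T^(s)(Q, P')`. -/
def transv1 (s : ℕ) :
    (MvPolynomial (Fin 2) ℂ × MvPolynomial (Fin 2) ℂ) →ₗ[ℂ]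
      (MvPolynomial (Fin 2) ℂ × MvPolynomial (Fin 2) ℂ) →ₗ[ℂ] MvPolynomial (Fin 2) ℂ :=
  (transvBil s).compl₁₂ (LinearMap.fst ℂ _ _) (LinearMap.snd ℂ _ _) -
    (transvBil s).compl₁₂ (LinearMap.snd ℂ _ _) (LinearMap.fst ℂ _ _)

/-! On monomials every transvectant is diagonal: `T^(r)(x^s, x^t)` is an integer multiple of the
single monomial `x^(s + t - (r, r))`, the multiple coming from `∂ᵢᵏ x^s = (sᵢ)ₖ x^(s - k eᵢ)`.
Hence `T^{(1,2)}(H, ·)` and `T^{(1,2)}(·, H')` send each monomial of a well-chosen component to a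
multiple of a single monomial of `V_8`, and every monomial of degree 8 is reached with a nonzero
multiple; since these monomials span `V_8`, both maps are onto. The vanishing of
`T^{(1,2)}(H, H')` is the cancellation `360 X₂⁴Y₂⁴ - 360 X₂⁴Y₂⁴`. -/

open Finsupp (single)

namespace MvPolynomial

variable {σ R : Type*} [CommSemiring R]

theorem pderiv_pow_monomial (i : σ) (k : ℕ) (s : σ →₀ ℕ) (a : R) :
    ((pderiv i).toLinearMap ^ k) (monomial s a) =
      monomial (s - single i k) (a * (s i).descFactorial k) := by
  classical
  induction k with
  | zero => simp
  | succ k ih =>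
    rw [pow_succ', Module.End.mul_apply, ih, Derivation.coeFn_coe, pderiv_monomial, tsub_tsub,
      ← Finsupp.single_add, Finsupp.tsub_apply, Finsupp.single_eq_same, Nat.descFactorial_succ,
      Nat.cast_mul, mul_assoc, mul_comm (((s i).descFactorial k : R))]

theorem monomial_congr_of_ne_zero {s t : σ →₀ ℕ} {a : R} (h : a ≠ 0 → s = t) :
    monomial s a = monomial t a := by
  by_cases ha : a = 0
  · simp [ha]
  · rw [h ha]

theorem homogeneousSubmodule_eq_span_monomial (n : ℕ) :
    homogeneousSubmodule σ R n =
      Submodule.span R ((fun d => monomial d 1) '' {d | d.degree = n}) := by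
  rw [homogeneousSubmodule_eq_finsupp_supported, AddMonoidAlgebra.supported_eq_span_single]
  rfl

theorem homogeneousSubmodule_le_map_of_monomial {K M : Type*} [Field K] [AddCommGroup M]
    [Module K M] {f : M →ₗ[K] MvPolynomial σ K} {S : Submodule K M} {n : ℕ}
    (h : ∀ d : σ →₀ ℕ, d.degree = n → ∃ x ∈ S, ∃ c ≠ (0 : K), f x = c • monomial d 1) :
    homogeneousSubmodule σ K n ≤ S.map f := by
  rw [homogeneousSubmodule_eq_span_monomial, Submodule.span_le]
  rintro _ ⟨d, hd, rfl⟩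
  obtain ⟨x, hx, c, hc, hfx⟩ := h d hd
  exact (Submodule.smul_mem_iff _ hc).mp (hfx ▸ Submodule.mem_map_of_mem hx)

theorem X_zero_pow_mul_X_one_pow (a b : ℕ) :
    (X 0 ^ a * X 1 ^ b : MvPolynomial (Fin 2) R) = monomial (single 0 a + single 1 b) 1 := by
  simp [X_pow_eq_monomial, monomial_mul]

end MvPolynomial

theorem Finsupp.degree_fin_two (d : Fin 2 →₀ ℕ) : d.degree = d 0 + d 1 := by
  rw [Finsupp.degree_eq_sum, Fin.sum_univ_two]

open MvPolynomial

def transvCoeff (r : ℕ) (s t : Fin 2 →₀ ℕ) : ℤ :=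
  ∑ i ∈ Finset.range (r + 1), (-1) ^ i * r.choose i *
    ((s 0).descFactorial (r - i) * (s 1).descFactorial i *
      (t 0).descFactorial i * (t 1).descFactorial (r - i) : ℕ)

/-- The exponent is a truncated difference, but it only truncates when the coefficient is zero. -/
theorem transvBil_monomial (r : ℕ) (s t : Fin 2 →₀ ℕ) (a b : ℂ) :
    transvBil r (monomial s a) (monomial t b) =
      monomial (s + t - (single 0 r + single 1 r)) (transvCoeff r s t * a * b) := by
  simp only [transvBil, transvCoeff, LinearMap.sum_apply, LinearMap.smul_apply,
    LinearMap.compl₁₂_apply, LinearMap.mul_apply', Module.End.mul_apply, pderiv_pow_monomial,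
    monomial_mul, Int.cast_sum, Finset.sum_mul, map_sum, smul_monomial]
  refine Finset.sum_congr rfl fun i hi =>
    (congrArg _ ?_).trans (monomial_congr_of_ne_zero fun h => ?_)
  · simp
    ring
  simp only [Fin.isValue, Nat.cast_mul, Int.cast_mul, Int.cast_natCast, ne_eq, mul_eq_zero,
    Nat.cast_eq_zero, Nat.descFactorial_eq_zero_iff_lt, not_or, not_lt, tsub_le_iff_right,
    Finset.mem_range] at h hi
  ext j
  fin_cases j <;> simp <;> omega

theorem transvBil_monomial_one_eq_smul {r : ℕ} {s t d : Fin 2 →₀ ℕ}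
    (h : s + t - (single 0 r + single 1 r) = d) :
    transvBil r (monomial s 1) (monomial t 1) = (transvCoeff r s t : ℂ) • monomial d 1 := by
  rw [transvBil_monomial, smul_monomial, h, smul_eq_mul, mul_one, mul_one]

theorem transvCoeff_two (s t : Fin 2 →₀ ℕ) :
    transvCoeff 2 s t = (s 0).descFactorial 2 * (t 1).descFactorial 2 -
      2 * (s 0 * s 1 * t 0 * t 1) + (s 1).descFactorial 2 * (t 0).descFactorial 2 := by
  simp [transvCoeff, Finset.sum_range_succ]
  ring

theorem transv1_apply (s : ℕ) (P Q P' Q' : MvPolynomial (Fin 2) ℂ) :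
    transv1 s (P, Q) (P', Q') = transvBil s P Q' - transvBil s Q P' := rfl

theorem transv1_H_H'_eq_zero :
    transv1 2 (X 0 ^ 2 * X 1 ^ 6, X 0 ^ 6 * X 1 ^ 2) (X 1 ^ 4, X 0 ^ 4) = 0 := by
  rw [transv1_apply, X_zero_pow_mul_X_one_pow, X_zero_pow_mul_X_one_pow, X_pow_eq_monomial,
    X_pow_eq_monomial, transvBil_monomial, transvBil_monomial, sub_eq_zero]
  refine congrArg₂ (fun d c => monomial d c) ?_ ?_
  · ext j
    fin_cases j <;> simp
  · simp [transvCoeff_two]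

theorem exists_transv1_H_eq_smul_monomial (d : Fin 2 →₀ ℕ) (hd : d.degree = 8) :
    ∃ x ∈ (homogeneousSubmodule (Fin 2) ℂ 4).prod (homogeneousSubmodule (Fin 2) ℂ 4),
      ∃ c ≠ (0 : ℂ), transv1 2 (X 0 ^ 2 * X 1 ^ 6, X 0 ^ 6 * X 1 ^ 2) x = c • monomial d 1 := by
  rw [Finsupp.degree_fin_two] at hd
  obtain ⟨k, hk⟩ : ∃ k, d 1 = k := ⟨_, rfl⟩
  have hd0 : d 0 = 8 - k := by omega
  have hk8 : k ≤ 8 := by omega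
  simp only [X_zero_pow_mul_X_one_pow]
  rcases le_total k 4 with h | h
  · refine ⟨(monomial (d - single 0 4) 1, 0), ⟨isHomogeneous_monomial _ ?_, zero_mem _⟩,
      -(transvCoeff 2 (single 0 6 + single 1 2) (d - single 0 4) : ℂ), ?_, ?_⟩
    · simp [Finsupp.degree_fin_two]
      omega
    · simp [transvCoeff_two, hd0, hk]
      interval_cases k <;> norm_num [Nat.descFactorial]
    · rw [transv1_apply, transvBil_monomial_one_eq_smul (d := d), map_zero, zero_sub, neg_smul]
      rw [Finsupp.ext_iff, Fin.forall_fin_two]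
      simp
      omega
  · refine ⟨(0, monomial (d - single 1 4) 1), ⟨zero_mem _, isHomogeneous_monomial _ ?_⟩,
      (transvCoeff 2 (single 0 2 + single 1 6) (d - single 1 4) : ℂ), ?_, ?_⟩
    · simp [Finsupp.degree_fin_two]
      omega
    · simp [transvCoeff_two, hd0, hk]
      interval_cases k <;> norm_num [Nat.descFactorial]
    · rw [transv1_apply, transvBil_monomial_one_eq_smul (d := d), map_zero, sub_zero]
      rw [Finsupp.ext_iff, Fin.forall_fin_two]
      simp
      omega

theorem exists_transv1_flip_H'_eq_smul_monomial (d : Fin 2 →₀ ℕ) (hd : d.degree = 8) :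
    ∃ x ∈ (homogeneousSubmodule (Fin 2) ℂ 8).prod (homogeneousSubmodule (Fin 2) ℂ 8),
      ∃ c ≠ (0 : ℂ), (transv1 2).flip (X 1 ^ 4, X 0 ^ 4) x = c • monomial d 1 := by
  rw [Finsupp.degree_fin_two] at hd
  by_cases h : 2 ≤ d 0
  · refine ⟨(monomial (d + single 1 2 - single 0 2) 1, 0), ⟨isHomogeneous_monomial _ ?_, zero_mem _⟩,
      (transvCoeff 2 (d + single 1 2 - single 0 2) (single 0 4) : ℂ), ?_, ?_⟩
    · simp [Finsupp.degree_fin_two]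
      omega
    · simp [transvCoeff_two]
      norm_cast
    · simp only [LinearMap.flip_apply, transv1_apply, X_pow_eq_monomial]
      rw [transvBil_monomial_one_eq_smul (d := d), map_zero, LinearMap.zero_apply, sub_zero]
      rw [Finsupp.ext_iff, Fin.forall_fin_two]
      simp
      omega
  · refine ⟨(0, monomial (d + single 0 2 - single 1 2) 1), ⟨zero_mem _, isHomogeneous_monomial _ ?_⟩,
      -(transvCoeff 2 (d + single 0 2 - single 1 2) (single 1 4) : ℂ), ?_, ?_⟩
    · simp [Finsupp.degree_fin_two]
      omega
    · simp [transvCoeff_two]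
      norm_cast
    · simp only [LinearMap.flip_apply, transv1_apply, X_pow_eq_monomial]
      rw [transvBil_monomial_one_eq_smul (d := d), map_zero, LinearMap.zero_apply, zero_sub, neg_smul]
      rw [Finsupp.ext_iff, Fin.forall_fin_two]
      simp
      omega

/-- **Non-degeneracy of the transvectant pairing `T^{(1,2)} : V_{1,8} × V_{1,4} → V_{0,8}`.**
For `H = X₁X₂²Y₂⁶ + Y₁X₂⁶Y₂² ∈ V_{1,8}` and `H' = X₁Y₂⁴ + Y₁X₂⁴ ∈ V_{1,4}`:
`T^{(1,2)}(H, H') = 0`, while `T^{(1,2)}(H, •) : V_{1,4} → V_{0,8}` and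
`T^{(1,2)}(•, H') : V_{1,8} → V_{0,8}` are both surjective. -/
theorem transvectant_nondegenerate_18 :
    (transv1 2 (X 0 ^ 2 * X 1 ^ 6, X 0 ^ 6 * X 1 ^ 2) (X 1 ^ 4, X 0 ^ 4) = 0) ∧
    (∀ R ∈ homogeneousSubmodule (Fin 2) ℂ 8,
      ∃ PQ ∈ (homogeneousSubmodule (Fin 2) ℂ 4).prod (homogeneousSubmodule (Fin 2) ℂ 4),
        transv1 2 (X 0 ^ 2 * X 1 ^ 6, X 0 ^ 6 * X 1 ^ 2) PQ = R) ∧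
    (∀ R ∈ homogeneousSubmodule (Fin 2) ℂ 8,
      ∃ PQ ∈ (homogeneousSubmodule (Fin 2) ℂ 8).prod (homogeneousSubmodule (Fin 2) ℂ 8),
        transv1 2 PQ (X 1 ^ 4, X 0 ^ 4) = R) :=
  ⟨transv1_H_H'_eq_zero,
    fun _ hR => Submodule.mem_map.mp
      (homogeneousSubmodule_le_map_of_monomial exists_transv1_H_eq_smul_monomial hR),
    fun _ hR => Submodule.mem_map.mp
      (homogeneousSubmodule_le_map_of_monomial exists_transv1_flip_H'_eq_smul_monomial hR)⟩
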